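/- arXiv:1604.00583 — 2 statements merged into one kernel-verified Lean document; each statement's English description precedes it below -/
import Mathlib

section
/- For a square matrix A, the matrix recurrence φ_k(A) = A·φ_{k+1}(A) + (1/k!)·I holds for all k ≥ 1, where I is the identity matrix. -/
/-!
With `E(θ) = exp ((1 - θ) • A)` we have `E' = -A E` and `E 1 = 1`, so `θ ^ k / k! • E(θ)` has
derivative `θ ^ (k - 1) / (k - 1)! • E(θ) - θ ^ k / k! • A E(θ)` and increases by `1 / k!` over
`[0, 1]`; integrating that derivative gives the recurrence.
-/

noncomputable def phiM {n : ℕ} (k : ℕ) (M : Matrix (Fin n) (Fin n) ℝ) :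
    Matrix (Fin n) (Fin n) ℝ :=
  Matrix.of fun i j =>
    ∫ θ in (0:ℝ)..1, θ ^ (k - 1) / (Nat.factorial (k - 1)) * NormedSpace.exp ((1 - θ) • M) i j

open NormedSpace intervalIntegral MeasureTheory Nat

section BanachAlgebra

variable {𝔸 : Type*} [NormedRing 𝔸] [NormedAlgebra ℝ 𝔸]

noncomputable def phi (k : ℕ) (a : 𝔸) : 𝔸 :=
  ∫ θ in (0:ℝ)..1, (θ ^ (k - 1) / (k - 1)! : ℝ) • exp ((1 - θ) • a)

theorem phi_succ (k : ℕ) (a : 𝔸) :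
    phi (k + 1) a = ∫ θ in (0:ℝ)..1, (θ ^ k / k ! : ℝ) • exp ((1 - θ) • a) := by
  simp only [phi, add_tsub_cancel_right]

variable [CompleteSpace 𝔸]

theorem hasDerivAt_exp_one_sub_smul (a : 𝔸) (θ : ℝ) :
    HasDerivAt (fun t : ℝ => exp ((1 - t) • a)) (-(a * exp ((1 - θ) • a))) θ := by
  have h := (hasDerivAt_exp_smul_const' a (1 - θ)).scomp θ ((hasDerivAt_id θ).const_sub 1)
  rwa [neg_one_smul] at h

theorem continuous_exp_one_sub_smul (a : 𝔸) : Continuous fun t : ℝ => exp ((1 - t) • a) :=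
  continuous_iff_continuousAt.2 fun θ => (hasDerivAt_exp_one_sub_smul a θ).continuousAt

theorem continuous_pow_div_factorial_smul_exp (k : ℕ) (a : 𝔸) :
    Continuous fun θ : ℝ => (θ ^ k / k ! : ℝ) • exp ((1 - θ) • a) :=
  ((continuous_pow k).div_const _).smul (continuous_exp_one_sub_smul a)

theorem hasDerivAt_pow_div_factorial_smul_exp (k : ℕ) (a : 𝔸) (θ : ℝ) :
    HasDerivAt (fun t : ℝ => (t ^ (k + 1) / (k + 1)! : ℝ) • exp ((1 - t) • a))
      ((θ ^ k / k ! : ℝ) • exp ((1 - θ) • a)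
        - (θ ^ (k + 1) / (k + 1)! : ℝ) • (a * exp ((1 - θ) • a))) θ := by
  have hpow : HasDerivAt (fun t : ℝ => t ^ (k + 1) / (k + 1)!) (θ ^ k / k !) θ := by
    refine ((hasDerivAt_pow (k + 1) θ).div_const _).congr_deriv ?_
    rw [factorial_succ, add_tsub_cancel_right]
    push_cast
    field_simp
  refine (hpow.smul (hasDerivAt_exp_one_sub_smul a θ)).congr_deriv ?_
  rw [smul_neg, neg_add_eq_sub]

theorem mul_phi_succ (k : ℕ) (a : 𝔸) :
    a * phi (k + 1) a = ∫ θ in (0:ℝ)..1, (θ ^ k / k ! : ℝ) • (a * exp ((1 - θ) • a)) := by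
  simp_rw [phi_succ, ← mul_smul_comm]
  exact ((ContinuousLinearMap.mul ℝ 𝔸 a).intervalIntegral_comp_comm
    ((continuous_pow_div_factorial_smul_exp k a).intervalIntegrable 0 1)).symm

theorem phi_succ_eq_mul_phi_add (k : ℕ) (a : 𝔸) :
    phi (k + 1) a = a * phi (k + 1 + 1) a + (1 / (k + 1)! : ℝ) • 1 := by
  have hint₁ := (continuous_pow_div_factorial_smul_exp k a).intervalIntegrable (μ := volume) 0 1
  have hint₂ : IntervalIntegrable
      (fun θ : ℝ => (θ ^ (k + 1) / (k + 1)! : ℝ) • (a * exp ((1 - θ) • a))) volume 0 1 :=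
    (((continuous_pow _).div_const _).smul
      (continuous_const.mul (continuous_exp_one_sub_smul a))).intervalIntegrable 0 1
  have hftc := integral_eq_sub_of_hasDerivAt
    (fun θ _ => hasDerivAt_pow_div_factorial_smul_exp k a θ) (hint₁.sub hint₂)
  rw [integral_sub hint₁ hint₂] at hftc
  simp only [one_pow, one_div, sub_self, zero_smul, exp_zero, ne_eq, Nat.add_eq_zero_iff,
    one_ne_zero, and_false, not_false_eq_true, zero_pow, zero_div, sub_zero, one_smul] at hftc
  rw [phi_succ, mul_phi_succ, one_div, ← hftc, add_sub_cancel]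

end BanachAlgebra

section Matrix

-- Any submultiplicative norm would do: it only serves to make matrices a Banach algebra, and
-- `phiM` does not depend on it.
attribute [local instance] Matrix.linftyOpNormedRing Matrix.linftyOpNormedAlgebra

theorem phiM_eq_phi {n : ℕ} (k : ℕ) (M : Matrix (Fin n) (Fin n) ℝ) : phiM k M = phi k M := by
  ext i j
  exact (Matrix.entryLinearMap ℝ ℝ i j).toContinuousLinearMap.intervalIntegral_comp_comm
    ((continuous_pow_div_factorial_smul_exp (k - 1) M).intervalIntegrable 0 1)

theorem phiM_succ_eq_mul_phiM_add {n : ℕ} (k : ℕ) (A : Matrix (Fin n) (Fin n) ℝ) :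
    phiM (k + 1) A = A * phiM (k + 1 + 1) A + (1 / (k + 1)! : ℝ) • 1 := by
  rw [phiM_eq_phi, phiM_eq_phi]
  exact phi_succ_eq_mul_phi_add k A

end Matrix

theorem phiM_recurrence {n : ℕ} (k : ℕ) (hk : 1 ≤ k) (A : Matrix (Fin n) (Fin n) ℝ) :
    phiM k A = A * phiM (k + 1) A + (1 / (Nat.factorial k : ℝ)) • (1 : Matrix (Fin n) (Fin n) ℝ) := by
  obtain ⟨m, rfl⟩ := Nat.exists_eq_add_of_le' hk
  exact phiM_succ_eq_mul_phiM_add m A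
end

section
/- Inductive error propagation bound (key step of Lemma A.1/Lemma 4.5 analogue): suppose nonnegative reals E_2, …, E_s, e, and h ≤ C_H satisfy e < δ < 1 and, for each i, E_i ≤ C e + C h e² + h Σ_{j=2}^{i−1} C (h + e + E_j) E_j. Then there exists a constant 𝐂 depending only on C, C_H, s, δ such that E_i ≤ 𝐂 e + 𝐂 h e² for all i = 2, …, s. -/
open Finset

/-! Since `e ≤ 1` and `h ≤ C_H`, the recursion is dominated by
`E i ≤ a e + b ∑_{j<i} (c + E j) E j` with constants depending only on `C, C_H`.
By strong induction `E i ≤ g i e`, where `g` is an explicit increasing sequence: each earlier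
`E j` is at most `g (i-1) e ≤ g (i-1)`, so a quadratic term `(c + E j) E j` costs only one
factor of `e`. Taking `K = g s` gives the claim, the term `K h e²` being nonnegative. -/

noncomputable def quadGronwallBound (a b c : ℝ) : ℕ → ℝ
  | 0 => a
  | n + 1 => quadGronwallBound a b c n + a
      + b * (n + 1) * (c + quadGronwallBound a b c n) * quadGronwallBound a b c n

section QuadGronwall

variable {a b c : ℝ}

theorem quadGronwallBound_nonneg (ha : 0 ≤ a) (hb : 0 ≤ b) (hc : 0 ≤ c) :
    ∀ n, 0 ≤ quadGronwallBound a b c n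
  | 0 => ha
  | n + 1 => by
    have := quadGronwallBound_nonneg ha hb hc n
    simp only [quadGronwallBound]
    positivity

theorem quadGronwallBound_mono (ha : 0 ≤ a) (hb : 0 ≤ b) (hc : 0 ≤ c) :
    Monotone (quadGronwallBound a b c) := by
  refine monotone_nat_of_le_succ fun n => ?_
  have := quadGronwallBound_nonneg ha hb hc n
  simp only [quadGronwallBound]
  nlinarith [show 0 ≤ b * (n + 1) * (c + quadGronwallBound a b c n) * quadGronwallBound a b c n
    by positivity]

theorem le_quadGronwallBound_mul_of_le_sum (ha : 0 ≤ a) (hb : 0 ≤ b) (hc : 0 ≤ c)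
    {e : ℝ} (he0 : 0 ≤ e) (he1 : e ≤ 1) {x : ℕ → ℝ} {m s : ℕ}
    (hx0 : ∀ i, m ≤ i → i ≤ s → 0 ≤ x i)
    (hx : ∀ i, m ≤ i → i ≤ s → x i ≤ a * e + b * ∑ j ∈ Ico m i, (c + x j) * x j) :
    ∀ i, m ≤ i → i ≤ s → x i ≤ quadGronwallBound a b c i * e := by
  set g := quadGronwallBound a b c
  intro i
  induction i using Nat.strong_induction_on with
  | _ i ih =>
  intro hmi his
  rcases i with _ | n
  · simpa [g, quadGronwallBound] using hx 0 hmi his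
  have hgn := quadGronwallBound_nonneg ha hb hc n
  have hterm : ∀ j ∈ Ico m (n + 1), (c + x j) * x j ≤ (c + g n) * g n * e := by
    intro j hj
    obtain ⟨hmj, hjn⟩ := mem_Ico.mp hj
    have hxj : x j ≤ g n * e := (ih j hjn hmj (by omega)).trans <|
      mul_le_mul_of_nonneg_right (quadGronwallBound_mono ha hb hc (by omega)) he0
    have hxj' : x j ≤ g n := hxj.trans (mul_le_of_le_one_right hgn he1)
    rw [mul_assoc]
    exact mul_le_mul (by linarith) hxj (hx0 j hmj (by omega)) (by linarith)
  have hsum : ∑ j ∈ Ico m (n + 1), (c + x j) * x j ≤ (n + 1) * ((c + g n) * g n * e) :=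
    calc ∑ j ∈ Ico m (n + 1), (c + x j) * x j
        ≤ #(Ico m (n + 1)) • ((c + g n) * g n * e) := sum_le_card_nsmul _ _ _ hterm
      _ ≤ (n + 1) * ((c + g n) * g n * e) := by
        rw [nsmul_eq_mul, Nat.card_Ico]
        gcongr
        exact_mod_cast Nat.sub_le _ _
  calc x (n + 1) ≤ a * e + b * ((n + 1) * ((c + g n) * g n * e)) :=
        (hx _ hmi his).trans (by gcongr)
    _ ≤ g (n + 1) * e := by
        simp only [g, quadGronwallBound]
        nlinarith [mul_nonneg hgn he0]

end QuadGronwall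

theorem error_recursion_le {C C_H e h : ℝ} (hC : 0 ≤ C) (he0 : 0 ≤ e) (he1 : e ≤ 1)
    (hh0 : 0 ≤ h) (hhCH : h ≤ C_H) {E : ℕ → ℝ} {m i : ℕ} (hE0 : ∀ j ∈ Ico m i, 0 ≤ E j) :
    C * e + C * h * e ^ 2 + h * ∑ j ∈ Ico m i, C * (h + e + E j) * E j
      ≤ C * (1 + C_H) * e + C_H * C * ∑ j ∈ Ico m i, (C_H + 1 + E j) * E j := by
  have hsum : ∑ j ∈ Ico m i, C * (h + e + E j) * E j
      ≤ C * ∑ j ∈ Ico m i, (C_H + 1 + E j) * E j := by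
    rw [mul_sum]
    refine sum_le_sum fun j hj => ?_
    have := hE0 j hj
    rw [mul_assoc]
    gcongr
  have hsum0 : 0 ≤ ∑ j ∈ Ico m i, C * (h + e + E j) * E j :=
    sum_nonneg fun j hj => by have := hE0 j hj; positivity
  have hCH : 0 ≤ C_H := hh0.trans hhCH
  have hquad : h * e ^ 2 ≤ C_H * e := by nlinarith [mul_nonneg hh0 he0]
  calc C * e + C * h * e ^ 2 + h * ∑ j ∈ Ico m i, C * (h + e + E j) * E j
      = C * e + C * (h * e ^ 2) + h * ∑ j ∈ Ico m i, C * (h + e + E j) * E j := by ring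
    _ ≤ C * e + C * (C_H * e) + C_H * (C * ∑ j ∈ Ico m i, (C_H + 1 + E j) * E j) := by gcongr
    _ = C * (1 + C_H) * e + C_H * C * ∑ j ∈ Ico m i, (C_H + 1 + E j) * E j := by ring

theorem inductive_error_bound_general (C C_H δ : ℝ) (s : ℕ)
    (hC : 0 < C) (hCH : 0 < C_H) (hδ1 : δ < 1) :
    ∃ K : ℝ, 0 < K ∧
      ∀ (E : ℕ → ℝ) (e h : ℝ),
        0 ≤ e → e < δ → 0 ≤ h → h ≤ C_H →
        (∀ i, 2 ≤ i → i ≤ s → 0 ≤ E i) →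
        (∀ i, 2 ≤ i → i ≤ s →
          E i ≤ C * e + C * h * e ^ 2
            + h * ∑ j ∈ Finset.Ico 2 i, C * (h + e + E j) * E j) →
        ∀ i, 2 ≤ i → i ≤ s → E i ≤ K * e + K * h * e ^ 2 := by
  have ha : 0 ≤ C * (1 + C_H) := by positivity
  have hb : 0 ≤ C_H * C := by positivity
  have hc : 0 ≤ C_H + 1 := by positivity
  set g := quadGronwallBound (C * (1 + C_H)) (C_H * C) (C_H + 1)
  have hK : 0 < g s :=
    (show 0 < C * (1 + C_H) by positivity).trans_le (quadGronwallBound_mono ha hb hc s.zero_le)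
  refine ⟨g s, hK, fun E e h he0 heδ hh0 hhCH hE0 hrec => ?_⟩
  have he1 : e ≤ 1 := (heδ.trans hδ1).le
  have hdom : ∀ i, 2 ≤ i → i ≤ s →
      E i ≤ C * (1 + C_H) * e + C_H * C * ∑ j ∈ Ico 2 i, (C_H + 1 + E j) * E j :=
    fun i hi his => (hrec i hi his).trans <| error_recursion_le hC.le he0 he1 hh0 hhCH
      fun j hj => hE0 j (mem_Ico.mp hj).1 ((mem_Ico.mp hj).2.le.trans his)
  intro i hi his
  calc E i ≤ g i * e := le_quadGronwallBound_mul_of_le_sum ha hb hc he0 he1 hE0 hdom i hi his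
    _ ≤ g s * e := mul_le_mul_of_nonneg_right (quadGronwallBound_mono ha hb hc his) he0
    _ ≤ g s * e + g s * h * e ^ 2 := le_add_of_nonneg_right (by positivity)

theorem inductive_error_bound (C C_H δ : ℝ) (s : ℕ)
    (hC : 0 < C) (hCH : 0 < C_H) (hδ0 : 0 < δ) (hδ1 : δ < 1) :
    ∃ K : ℝ, 0 < K ∧
      ∀ (E : ℕ → ℝ) (e h : ℝ),
        0 ≤ e → e < δ → 0 ≤ h → h ≤ C_H →
        (∀ i, 2 ≤ i → i ≤ s → 0 ≤ E i) →
        (∀ i, 2 ≤ i → i ≤ s →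
          E i ≤ C * e + C * h * e ^ 2
            + h * ∑ j ∈ Finset.Ico 2 i, C * (h + e + E j) * E j) →
        ∀ i, 2 ≤ i → i ≤ s → E i ≤ K * e + K * h * e ^ 2 :=
  inductive_error_bound_general C C_H δ s hC hCH hδ1
end
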